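/- arXiv:2109.04633 — 2 statements merged into one kernel-verified Lean document; each statement's English description precedes it below -/
import Mathlib

section
/- For a semantic Horn system with μ the least fixed point of its immediate consequence operator: there exists a tuple of relations R that is a solution of the system (i.e. satisfies all base, induction, and end clauses) if and only if μ is a solution of the system. -/
/-!
Base and induction clauses together say exactly that `R` is a pre-fixed point of the immediate
consequence operator `F`, whereas end clauses are downward closed. Hence `μ`, a fixed point,
satisfies the base and induction clauses, and, lying below every pre-fixed point, it inherits the
end clauses from any solution.
-/

universe u

/-- A semantic Horn system over `M` with `n` predicate places of arities `k`. -/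
structure HornSystem (M : Type u) (n : ℕ) (k : Fin n → ℕ) where
  /-- index type for base clauses -/
  BaseIdx : Type u
  baseTarget : BaseIdx → Fin n
  BaseParam : BaseIdx → Type u
  baseC : (b : BaseIdx) → BaseParam b → Prop
  baseHead : (b : BaseIdx) → BaseParam b → Fin (k (baseTarget b)) → M
  /-- index type for induction clauses -/
  IndIdx : Type u
  indTarget : IndIdx → Fin n
  IndParam : IndIdx → Type u
  indC : (c : IndIdx) → IndParam c → Prop
  indLen : IndIdx → ℕ
  indLenPos : ∀ c, 1 ≤ indLen c
  indBodyIdx : (c : IndIdx) → Fin (indLen c) → Fin n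
  indBody : (c : IndIdx) → (l : Fin (indLen c)) → IndParam c → Fin (k (indBodyIdx c l)) → M
  indHead : (c : IndIdx) → IndParam c → Fin (k (indTarget c)) → M
  /-- index type for end clauses -/
  EndIdx : Type u
  EndParam : EndIdx → Type u
  endC : (e : EndIdx) → EndParam e → Prop
  endLen : EndIdx → ℕ
  endLenPos : ∀ e, 1 ≤ endLen e
  endBodyIdx : (e : EndIdx) → Fin (endLen e) → Fin n
  endBody : (e : EndIdx) → (l : Fin (endLen e)) → EndParam e → Fin (k (endBodyIdx e l)) → M

namespace HornSystem

variable {M : Type u} {n : ℕ} {k : Fin n → ℕ}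

/-- `R` satisfies all base clauses. -/
def SatBase (S : HornSystem M n k) (R : ∀ j, Set (Fin (k j) → M)) : Prop :=
  ∀ b p, S.baseC b p → S.baseHead b p ∈ R (S.baseTarget b)

/-- `R` satisfies all induction clauses. -/
def SatInd (S : HornSystem M n k) (R : ∀ j, Set (Fin (k j) → M)) : Prop :=
  ∀ c p, S.indC c p → (∀ l, S.indBody c l p ∈ R (S.indBodyIdx c l)) →
    S.indHead c p ∈ R (S.indTarget c)

/-- `R` satisfies all end clauses. -/
def SatEnd (S : HornSystem M n k) (R : ∀ j, Set (Fin (k j) → M)) : Prop :=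
  ∀ e, ¬ ∃ p, S.endC e p ∧ ∀ l, S.endBody e l p ∈ R (S.endBodyIdx e l)

/-- `R` is a solution of the system: it satisfies every clause. -/
def IsSolution (S : HornSystem M n k) (R : ∀ j, Set (Fin (k j) → M)) : Prop :=
  S.SatBase R ∧ S.SatInd R ∧ S.SatEnd R

/-- The immediate consequence operator of the system. -/
def F (S : HornSystem M n k) (R : ∀ j, Set (Fin (k j) → M)) :
    ∀ j, Set (Fin (k j) → M) := fun j =>
  {a | (∃ b, ∃ h : S.baseTarget b = j, ∃ p, S.baseC b p ∧ a = h ▸ S.baseHead b p) ∨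
       (∃ c, ∃ h : S.indTarget c = j, ∃ p, S.indC c p ∧
          (∀ l, S.indBody c l p ∈ R (S.indBodyIdx c l)) ∧ a = h ▸ S.indHead c p)}

theorem F_mono (S : HornSystem M n k) : Monotone S.F := by
  intro R R' h j a ha
  rcases ha with ⟨b, hb, p, hC, ha⟩ | ⟨c, hc, p, hC, hbody, ha⟩
  · exact Or.inl ⟨b, hb, p, hC, ha⟩
  · exact Or.inr ⟨c, hc, p, hC, fun l => h _ (hbody l), ha⟩

/-- The immediate consequence operator, bundled as a monotone map. -/
def Fhom (S : HornSystem M n k) :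
    (∀ j, Set (Fin (k j) → M)) →o (∀ j, Set (Fin (k j) → M)) :=
  ⟨S.F, S.F_mono⟩

/-- The least fixed point of the immediate consequence operator
(exists by the Knaster–Tarski theorem). -/
def mu (S : HornSystem M n k) : ∀ j, Set (Fin (k j) → M) :=
  OrderHom.lfp S.Fhom

end HornSystem

namespace HornSystem

variable {M : Type u} {n : ℕ} {k : Fin n → ℕ} {S : HornSystem M n k}
  {R R' : ∀ j, Set (Fin (k j) → M)}

theorem F_le_iff : S.F R ≤ R ↔ S.SatBase R ∧ S.SatInd R := by
  constructor
  · intro hR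
    exact ⟨fun b p hC => hR _ (Or.inl ⟨b, rfl, p, hC, rfl⟩),
      fun c p hC hbody => hR _ (Or.inr ⟨c, rfl, p, hC, hbody, rfl⟩)⟩
  · rintro ⟨hB, hI⟩ j a (⟨b, rfl, p, hC, rfl⟩ | ⟨c, rfl, p, hC, hbody, rfl⟩)
    · exact hB b p hC
    · exact hI c p hC hbody

theorem SatEnd.anti (hR' : S.SatEnd R') (hRR' : R ≤ R') : S.SatEnd R :=
  fun e ⟨p, hC, hbody⟩ => hR' e ⟨p, hC, fun l => hRR' _ (hbody l)⟩

variable (S) in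
theorem F_mu : S.F S.mu = S.mu :=
  OrderHom.map_lfp S.Fhom

theorem IsSolution.mu_le (hR : S.IsSolution R) : S.mu ≤ R :=
  OrderHom.lfp_le S.Fhom (F_le_iff.2 ⟨hR.1, hR.2.1⟩)

end HornSystem

/-- A semantic Horn system has a solution iff the least fixed point `μ`
of its immediate consequence operator is a solution. -/
theorem hornSystem_solvable_iff_mu_solution {M : Type u} {n : ℕ} {k : Fin n → ℕ}
    (S : HornSystem M n k) :
    (∃ R : ∀ j, Set (Fin (k j) → M), S.IsSolution R) ↔ S.IsSolution S.mu := by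
  refine ⟨fun ⟨R, hR⟩ => ?_, fun hmu => ⟨S.mu, hmu⟩⟩
  obtain ⟨hBase, hInd⟩ := HornSystem.F_le_iff.1 S.F_mu.le
  exact ⟨hBase, hInd, hR.2.2.anti hR.mu_le⟩
end

section
/- The set {n : ℕ | Even n} of even natural numbers is not definable without parameters in the L-structure ℕ; that is, there is no L-formula φ with one free variable whose realization set in ℕ equals the set of even numbers. -/
open FirstOrder

/-- The first-order language with exactly one constant symbol and one unary function
symbol (and no other symbols). -/
def succLang : Language where
  Functions := fun n =>
    match n with
    | 0 => PUnit
    | 1 => PUnit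
    | _ + 2 => Empty
  Relations := fun _ => Empty

/-- The `succLang`-structure on `ℕ` interpreting the constant as `0` and the unary
function as the successor function. -/
instance : succLang.Structure ℕ where
  funMap {n} f x :=
    match n, f, x with
    | 0, _, _ => 0
    | 1, _, x => x 0 + 1
  RelMap {n} r := nomatch r

namespace SuccProof

open FirstOrder Language

/-- Height of a term: the number of successor applications. -/
def ht {γ : Type*} : succLang.Term γ → ℕ
  | .var _ => 0
  | @Term.func _ _ l f ts =>
    match l, f, ts with
    | 0, _, _ => 0
    | 1, _, ts => ht (ts 0) + 1
    | _ + 2, f, _ => nomatch f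

lemma term_classify {γ : Type*} (t : succLang.Term γ) :
    (∀ g : γ → ℕ, t.realize g = ht t) ∨ ∃ i, ∀ g : γ → ℕ, t.realize g = g i + ht t := by
  induction t with
  | var i => exact Or.inr ⟨i, fun g => by simp [ht]⟩
  | @func l f ts ih =>
    match l, f, ts, ih with
    | 0, f, ts, ih => exact Or.inl (fun g => rfl)
    | 1, f, ts, ih =>
      rcases ih 0 with h | ⟨i, h⟩
      · exact Or.inl (fun g => by
          show Term.realize g (ts 0) + 1 = ht (ts 0) + 1
          rw [h g])
      · exact Or.inr ⟨i, fun g => by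
          show Term.realize g (ts 0) + 1 = g i + (ht (ts 0) + 1)
          rw [h g]; ring⟩
    | _ + 2, f, _, _ => exact nomatch f

/-- Clipped difference of two naturals, truncated to `[-(m+1), m+1]`. -/
def clip (m : ℕ) (a b : ℤ) : ℤ := max (-(m + 1 : ℤ)) (min (m + 1) (b - a))

/-- Two assignments are `m`-equivalent if all clipped pairwise differences and
clipped distances to `0` agree. -/
def Equi (m : ℕ) {γ : Type*} (v w : γ → ℕ) : Prop :=
  (∀ i, min (v i) (m + 1) = min (w i) (m + 1)) ∧
    ∀ i j, clip m (v i) (v j) = clip m (w i) (w j)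

lemma Equi.symm {m : ℕ} {γ : Type*} {v w : γ → ℕ} (h : Equi m v w) : Equi m w v :=
  ⟨fun i => (h.1 i).symm, fun i j => (h.2 i j).symm⟩

lemma Equi.mono {m k : ℕ} {γ : Type*} {v w : γ → ℕ} (h : Equi m v w) (hk : k ≤ m) :
    Equi k v w := by
  refine ⟨fun i => ?_, fun i j => ?_⟩
  · have := h.1 i; omega
  · have := h.2 i j; unfold clip at *; omega

lemma Equi.comp {m : ℕ} {γ δ : Type*} {v w : γ → ℕ} (h : Equi m v w) (f : δ → γ) :
    Equi m (v ∘ f) (w ∘ f) :=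
  ⟨fun i => h.1 (f i), fun i j => h.2 (f i) (f j)⟩

/-- Extension lemma: a new point can be matched while halving the resolution. -/
lemma exists_extension {γ : Type*} [Fintype γ] {k : ℕ} {v w : γ → ℕ}
    (h : Equi (2 * k + 1) v w) (b : ℕ) :
    ∃ c, Equi k (fun o : Option γ => o.elim b v) (fun o : Option γ => o.elim c w) := by
  by_cases hA : ∃ i, v i ≤ b + k ∧ b ≤ v i + k
  · -- b is close to some old point
    obtain ⟨i, hi1, hi2⟩ := hA
    refine ⟨w i + b - v i, ⟨fun o => ?_, fun o o' => ?_⟩⟩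
    · cases o with
      | none =>
        have := h.1 i
        simp only [Option.elim]
        omega
      | some j =>
        have := h.1 j
        simp only [Option.elim]
        omega
    · cases o with
      | none =>
        cases o' with
        | none =>
          simp only [Option.elim, clip]
          omega
        | some j =>
          have h1 := h.1 i
          have h2 := h.1 j
          have h3 := h.2 i j
          simp only [Option.elim]
          unfold clip at *
          omega
      | some j =>
        cases o' with
        | none =>
          have h1 := h.1 i
          have h2 := h.1 j
          have h3 := h.2 i j
          simp only [Option.elim]
          unfold clip at *
          omega
        | some j' =>
          have h3 := h.2 j j'
          simp only [Option.elim]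
          unfold clip at *
          omega
  · push_neg at hA
    by_cases hb : b ≤ k
    · -- b is small, far from every old point
      refine ⟨b, ⟨fun o => ?_, fun o o' => ?_⟩⟩
      · cases o with
        | none => rfl
        | some j => have := h.1 j; simp only [Option.elim]; omega
      · cases o with
        | none =>
          cases o' with
          | none => rfl
          | some j =>
            have h1 := h.1 j
            have h2 := hA j
            simp only [Option.elim]
            unfold clip at *
            omega
        | some j =>
          cases o' with
          | none =>
            have h1 := h.1 j
            have h2 := hA j
            simp only [Option.elim]
            unfold clip at *
            omega
          | some j' =>
            have h3 := h.2 j j'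
            simp only [Option.elim]
            unfold clip at *
            omega
    · -- b is large and far from every old point
      classical
      set s : ℕ := (Finset.univ.filter fun j => v j ≤ b).sup (fun j => w j + k + 1) with hs
      set c : ℕ := max s (k + 1) with hc
      have hwbig : ∀ j, b < v j → 2 * k + 2 ≤ w j := by
        intro j hj
        have h1 := h.1 j
        have h2 := hA j
        omega
      have hub : ∀ j, v j ≤ b → w j + k + 1 ≤ c := by
        intro j hj
        have : w j + k + 1 ≤ s :=
          Finset.le_sup (f := fun j => w j + k + 1) (Finset.mem_filter.2 ⟨Finset.mem_univ j, hj⟩)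
        omega
      have hlb : ∀ j, b < v j → c + k + 1 ≤ w j := by
        intro j hj
        have hw2 := hwbig j hj
        have hsle : s ≤ w j - (k + 1) := by
          apply Finset.sup_le
          intro x hx
          have hx' := (Finset.mem_filter.1 hx).2
          have h3 := h.2 x j
          have h4 := hA x
          have h5 := hA j
          unfold clip at h3
          omega
        omega
      refine ⟨c, ⟨fun o => ?_, fun o o' => ?_⟩⟩
      · cases o with
        | none => simp only [Option.elim]; omega
        | some j => have := h.1 j; simp only [Option.elim]; omega
      · cases o with
        | none =>
          cases o' with
          | none => simp only [Option.elim, clip]; omega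
          | some j =>
            have h2 := hA j
            have h4 := hub j
            have h5 := hlb j
            simp only [Option.elim]
            unfold clip
            rcases le_or_gt (v j) b with hvb | hvb
            · have := h4 hvb; omega
            · have := h5 hvb; omega
        | some j =>
          cases o' with
          | none =>
            have h2 := hA j
            have h4 := hub j
            have h5 := hlb j
            simp only [Option.elim]
            unfold clip
            rcases le_or_gt (v j) b with hvb | hvb
            · have := h4 hvb; omega
            · have := h5 hvb; omega
          | some j' =>
            have h3 := h.2 j j'
            simp only [Option.elim]
            unfold clip at *
            omega

/-- Resolution bound needed for a formula. -/
def bnd : ∀ {n : ℕ}, succLang.BoundedFormula (Fin 1) n → ℕ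
  | _, .falsum => 0
  | _, .equal t₁ t₂ => max (ht t₁) (ht t₂)
  | _, .rel _ _ => 0
  | _, .imp φ ψ => max (bnd φ) (bnd ψ)
  | _, .all φ => 2 * bnd φ + 2

/-- The reindexing map used for quantifier steps. -/
def reidx (n : ℕ) : Fin 1 ⊕ Fin (n + 1) → Option (Fin 1 ⊕ Fin n)
  | .inl i => some (.inl i)
  | .inr j => Fin.lastCases none (fun j' => some (.inr j')) j

lemma reidx_spec {n : ℕ} (v : Fin 1 → ℕ) (xs : Fin n → ℕ) (b : ℕ) :
    ((fun o : Option (Fin 1 ⊕ Fin n) => o.elim b (Sum.elim v xs)) ∘ reidx n) =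
      Sum.elim v (Fin.snoc xs b) := by
  funext x
  cases x with
  | inl i => rfl
  | inr j =>
    induction j using Fin.lastCases with
    | last => simp [reidx, Function.comp]
    | cast j' => simp [reidx, Function.comp]

lemma main_lemma : ∀ {n : ℕ} (φ : succLang.BoundedFormula (Fin 1) n) (m : ℕ), bnd φ ≤ m →
    ∀ (v w : Fin 1 → ℕ) (xs : Fin n → ℕ) (ys : Fin n → ℕ),
      Equi m (Sum.elim v xs) (Sum.elim w ys) → (φ.Realize v xs ↔ φ.Realize w ys) := by
  intro n φ
  induction φ with
  | falsum => intro m hm v w xs ys hE; simp [BoundedFormula.Realize]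
  | equal t₁ t₂ =>
    intro m hm v w xs ys hE
    have hm1 : ht t₁ ≤ m := le_trans (le_max_left _ _) hm
    have hm2 : ht t₂ ≤ m := le_trans (le_max_right _ _) hm
    show t₁.realize (Sum.elim v xs) = t₂.realize (Sum.elim v xs) ↔
      t₁.realize (Sum.elim w ys) = t₂.realize (Sum.elim w ys)
    rcases term_classify t₁ with h1 | ⟨i, h1⟩ <;> rcases term_classify t₂ with h2 | ⟨j, h2⟩ <;>
      simp only [h1, h2]
    · have := hE.1 j; omega
    · have := hE.1 i; omega
    · have := hE.2 i j; unfold clip at this; omega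
  | rel R ts => exact Empty.elim R
  | imp φ ψ ih1 ih2 =>
    intro m hm v w xs ys hE
    simp only [BoundedFormula.realize_imp]
    rw [ih1 m (le_trans (le_max_left _ _) hm) v w xs ys hE,
      ih2 m (le_trans (le_max_right _ _) hm) v w xs ys hE]
  | all φ ih =>
    intro m hm v w xs ys hE
    simp only [BoundedFormula.realize_all]
    have key : ∀ (v w : Fin 1 → ℕ) (xs ys : Fin _ → ℕ),
        Equi m (Sum.elim v xs) (Sum.elim w ys) →
        (∀ a, φ.Realize v (Fin.snoc xs a)) → ∀ b, φ.Realize w (Fin.snoc ys b) := by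
      intro v w xs ys hE hall b
      have hE' : Equi (2 * bnd φ + 1) (Sum.elim w ys) (Sum.elim v xs) :=
        (hE.symm).mono (by unfold bnd at hm; omega)
      obtain ⟨c, hc⟩ := exists_extension hE' b
      have hc' := hc.comp (reidx _)
      rw [reidx_spec, reidx_spec] at hc'
      exact (ih (bnd φ) le_rfl w v (Fin.snoc ys b) (Fin.snoc xs c) hc').2 (hall c)
    exact ⟨fun hall => key v w xs ys hE hall, fun hall => key w v ys xs hE.symm hall⟩

end SuccProof

/-- The set of even natural numbers is not definable without
parameters in the structure `(ℕ, 0, succ)`. -/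
theorem even_not_definable :
    ¬ Set.Definable₁ (∅ : Set ℕ) succLang {n : ℕ | Even n} := by
  intro hdef
  obtain ⟨φ, hφ⟩ := Set.empty_definable_iff.1 hdef
  set m := SuccProof.bnd φ with hm
  set N : ℕ := m + 1 with hN
  have hE : SuccProof.Equi m (Sum.elim (fun _ : Fin 1 => 2 * N) (default : Fin 0 → ℕ))
      (Sum.elim (fun _ : Fin 1 => 2 * N + 1) (default : Fin 0 → ℕ)) := by
    constructor
    · intro i
      cases i with
      | inl i => simp only [Sum.elim_inl]; omega
      | inr j => exact j.elim0
    · intro i j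
      cases i with
      | inl i =>
        cases j with
        | inl j => simp only [Sum.elim_inl]; unfold SuccProof.clip; omega
        | inr j => exact j.elim0
      | inr i => exact i.elim0
  have hiff := SuccProof.main_lemma φ m le_rfl (fun _ => 2 * N) (fun _ => 2 * N + 1)
    default default hE
  have h1 : (fun _ : Fin 1 => 2 * N) ∈ {x : Fin 1 → ℕ | x 0 ∈ {n : ℕ | Even n}} := by
    simp only [Set.mem_setOf_eq]
    exact even_two_mul N
  rw [hφ] at h1
  rw [Set.mem_setOf_eq] at h1
  have hsub : (@default (Fin 0 → ℕ) Unique.instInhabited) =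
      (@default (Fin 0 → ℕ) Pi.instInhabited) := Subsingleton.elim _ _
  have h2 : φ.Realize (fun _ : Fin 1 => 2 * N + 1) := by
    unfold Language.Formula.Realize at h1 ⊢
    rw [hsub] at h1 ⊢
    exact hiff.1 h1
  have h2' : (fun _ : Fin 1 => 2 * N + 1) ∈ Set.ofPred φ.Realize := h2
  rw [← hφ] at h2'
  simp only [Set.mem_setOf_eq, Nat.even_iff] at h2'
  omega
end
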